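/- (Lévy's zero-one law, game-theoretic version) For any gamble f on the path space Ω of an imprecise probability tree, and any real α > 1, there exists a positive test supermartingale T with process multipliers bounded by α (μT(s)(x) ≤ α for all situations s and states x) such that T converges to +∞ on every path ω for which liminf_n E_V(f | ω^n) < f(ω). -/

import Mathlib

open Filter

/-- prefix of length `n` of a path -/
def pref {X : Type*} (ω : ℕ → X) (n : ℕ) : List X := (List.range n).map ω

/-- process difference -/
def pdiff {X : Type*} (M : List X → ℝ) (s : List X) : X → ℝ := fun x => M (s ++ [x]) - M s

/-- process multiplier -/
noncomputable def pmul {X : Type*} (M : List X → ℝ) (s : List X) : X → ℝ :=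
  fun x => M (s ++ [x]) / M s

/-- family of coherent upper expectations (local models of an imprecise probability tree) -/
def Coherent {X : Type*} (Q : List X → (X → ℝ) → ℝ) : Prop :=
  ∀ s : List X,
    (∀ h : X → ℝ, Q s h ≤ ⨆ x, h x) ∧
    (∀ h g : X → ℝ, Q s (h + g) ≤ Q s h + Q s g) ∧
    (∀ (h : X → ℝ) (c : ℝ), 0 ≤ c → Q s (c • h) = c * Q s h)

/-- supermartingale for the tree with local models `Q` -/
def IsSupermart {X : Type*} (Q : List X → (X → ℝ) → ℝ) (M : List X → ℝ) : Prop :=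
  ∀ s : List X, Q s (pdiff M s) ≤ 0

/-- bounded below process -/
def BddBelowProc {X : Type*} (M : List X → ℝ) : Prop := ∃ C : ℝ, ∀ s : List X, C ≤ M s

/-- test supermartingale: nonnegative supermartingale with initial value 1 -/
def IsTestSupermart {X : Type*} (Q : List X → (X → ℝ) → ℝ) (M : List X → ℝ) : Prop :=
  IsSupermart Q M ∧ (∀ s : List X, 0 ≤ M s) ∧ M [] = 1

/-- game-theoretic upper expectation conditional on a situation `s` -/
noncomputable def EV {X : Type*} (Q : List X → (X → ℝ) → ℝ) (f : (ℕ → X) → EReal)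
    (s : List X) : EReal :=
  sInf { y : EReal | ∃ M : List X → ℝ, IsSupermart Q M ∧ BddBelowProc M ∧
    (∀ ω : ℕ → X, pref ω s.length = s →
      f ω ≤ Filter.liminf (fun n => ((M (pref ω n) : ℝ) : EReal)) Filter.atTop) ∧
    y = ((M s : ℝ) : EReal) }

/-!
Fix rationals `a < b` and a bound `C` for `|f|`. Wherever `E_V(f|s) < a` there is a
supermartingale `M_s`, capped at `C`, with `M_s(s) < a` and `liminf M_s ≥ f` on every path
through `s`; following a path along which `M_s` never increases shows `M_s ≥ -C` after `s`.
A bettor who, from each such `s`, stakes a fixed small fraction `l` of its capital on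
`M_s - M_s(s)` until `M_s` reaches `b` keeps its multipliers below `1 + 4lC ≤ α`, and multiplies
its capital by at least `1 + l(b - a)` with every completed round. On a path with
`liminf E_V(f|ω^n) < a < b < f(ω)` rounds start infinitely often and all of them complete, so the
capital diverges. The mixture `∑ 2^-(k+1) T_k` over all rational pairs is the required test
supermartingale; it is again a supermartingale because `X` is finite.
-/

section

variable {X : Type*}

theorem pref_succ (ω : ℕ → X) (n : ℕ) : pref ω (n + 1) = pref ω n ++ [ω n] := by
  simp [pref, List.range_succ]

theorem take_pref (ω : ℕ → X) {m n : ℕ} (h : m ≤ n) : (pref ω n).take m = pref ω m := by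
  simp [pref, ← List.map_take, List.take_range, Nat.min_eq_left h]

theorem pref_length_eq_of_prefix {ω : ℕ → X} {s : List X} {n : ℕ} (h : s <+: pref ω n) :
    pref ω s.length = s := by
  have hle : s.length ≤ n := by simpa [pref] using h.length_le
  rw [← take_pref ω hle, ← List.prefix_iff_eq_take.mp h]

theorem exists_path_extending (t : List X) (g : List X → X) :
    ∃ ω : ℕ → X, pref ω t.length = t ∧ ∀ n, t.length ≤ n → ω n = g (pref ω n) := by
  let u : ℕ → List X := fun k => Nat.rec t (fun _ v => v ++ [g v]) k
  let ω : ℕ → X := fun n => if h : n < t.length then t[n] else g (u (n - t.length))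
  have hu : ∀ k, pref ω (t.length + k) = u k := by
    intro k
    induction k with
    | zero =>
      refine List.ext_getElem (by simp [pref, u]) fun i h _ => ?_
      have hi : i < t.length := by simpa [pref] using h
      simp [pref, ω, u, hi]
    | succ k ih =>
      rw [← add_assoc, pref_succ, ih]
      simp [ω, u]
  refine ⟨ω, hu 0, fun n hn => ?_⟩
  obtain ⟨k, rfl⟩ := Nat.exists_eq_add_of_le hn
  simp [ω, hu k]

namespace Coherent

variable {Q : List X → (X → ℝ) → ℝ}

theorem map_zero (hQ : Coherent Q) (s : List X) : Q s 0 = 0 := by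
  simpa using (hQ s).2.2 0 0 le_rfl

theorem le_add_of_le_add [Nonempty X] (hQ : Coherent Q) {s : List X} {h g : X → ℝ} {c : ℝ}
    (hle : ∀ x, h x ≤ g x + c) : Q s h ≤ Q s g + c :=
  calc Q s h = Q s (g + (h - g)) := by rw [add_sub_cancel]
    _ ≤ Q s g + Q s (h - g) := (hQ s).2.1 _ _
    _ ≤ Q s g + c := by
      gcongr
      exact ((hQ s).1 _).trans (ciSup_le fun x => by simp only [Pi.sub_apply]; linarith [hle x])

theorem exists_le [Finite X] [Nonempty X] (hQ : Coherent Q) (s : List X) (d : X → ℝ) :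
    ∃ x, d x ≤ Q s d := by
  obtain ⟨x₀, hx₀⟩ := Finite.exists_max fun x => -d x
  refine ⟨x₀, ?_⟩
  have h := hQ.le_add_of_le_add (s := s) (h := 0) (g := d) (c := -d x₀) fun x => by
    simp only [Pi.zero_apply]; linarith [hx₀ x]
  rw [hQ.map_zero] at h
  linarith

end Coherent

namespace IsSupermart

variable {Q : List X → (X → ℝ) → ℝ}

theorem zero (hQ : Coherent Q) : IsSupermart Q (0 : List X → ℝ) := fun s => by
  have hd : pdiff (0 : List X → ℝ) s = 0 := by funext x; simp [pdiff]
  rw [hd, hQ.map_zero]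

theorem add (hQ : Coherent Q) {M M' : List X → ℝ} (hM : IsSupermart Q M)
    (hM' : IsSupermart Q M') : IsSupermart Q (M + M') := fun s =>
  calc Q s (pdiff (M + M') s) = Q s (pdiff M s + pdiff M' s) := by
        congr 1; funext x; simp only [pdiff, Pi.add_apply]; ring
    _ ≤ Q s (pdiff M s) + Q s (pdiff M' s) := (hQ s).2.1 _ _
    _ ≤ 0 := add_nonpos (hM s) (hM' s)

theorem sum (hQ : Coherent Q) {ι : Type*} (I : Finset ι) {M : ι → List X → ℝ}
    (hM : ∀ i ∈ I, IsSupermart Q (M i)) : IsSupermart Q (∑ i ∈ I, M i) := by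
  classical
  induction I using Finset.induction_on with
  | empty => rw [Finset.sum_empty]; exact zero hQ
  | insert i I hi ih =>
    rw [Finset.sum_insert hi]
    exact (hM i (I.mem_insert_self i)).add hQ (ih fun j hj => hM j (Finset.mem_insert_of_mem hj))

theorem const_mul (hQ : Coherent Q) {M : List X → ℝ} (hM : IsSupermart Q M) {c : ℝ}
    (hc : 0 ≤ c) : IsSupermart Q fun t => c * M t := fun s => by
  have hd : pdiff (fun t => c * M t) s = c • pdiff M s := by
    funext x; simp only [pdiff, Pi.smul_apply, smul_eq_mul]; ring
  rw [hd, (hQ s).2.2 _ _ hc]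
  exact mul_nonpos_of_nonneg_of_nonpos hc (hM s)

theorem min_const [Nonempty X] (hQ : Coherent Q) {M : List X → ℝ} (hM : IsSupermart Q M)
    (c : ℝ) : IsSupermart Q fun t => min (M t) c := fun s => by
  by_cases hs : M s ≤ c
  · refine (hQ.le_add_of_le_add (g := pdiff M s) (c := 0) fun x => ?_).trans (by simpa using hM s)
    simp only [pdiff, min_eq_left hs, add_zero]
    linarith [min_le_left (M (s ++ [x])) c]
  · refine (hQ.le_add_of_le_add (g := 0) (c := 0) fun x => ?_).trans (by simp [hQ.map_zero])
    simp only [pdiff, min_eq_right (le_of_not_ge hs), Pi.zero_apply, add_zero]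
    linarith [min_le_right (M (s ++ [x])) c]

/-- Since `X` is finite, pointwise convergence of the local differences is uniform. -/
theorem of_tendsto [Finite X] [Nonempty X] (hQ : Coherent Q) {M : ℕ → List X → ℝ}
    {L : List X → ℝ} (hM : ∀ n, IsSupermart Q (M n))
    (hL : ∀ t, Tendsto (fun n => M n t) atTop (nhds (L t))) : IsSupermart Q L := by
  intro s
  refine le_of_forall_pos_le_add fun ε hε => ?_
  have hd : ∀ x, ∀ᶠ n in atTop, pdiff L s x - ε < pdiff (M n) s x := fun x =>
    ((hL _).sub (hL s)).eventually (lt_mem_nhds (sub_lt_self _ hε))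
  obtain ⟨n, hn⟩ := (eventually_all.2 hd).exists
  calc Q s (pdiff L s) ≤ Q s (pdiff (M n) s) + ε :=
        hQ.le_add_of_le_add fun x => by linarith [hn x]
    _ ≤ 0 + ε := by gcongr; exact hM n s

theorem tsum [Finite X] [Nonempty X] (hQ : Coherent Q) {M : ℕ → List X → ℝ}
    (hM : ∀ k, IsSupermart Q (M k)) (hsum : ∀ t, Summable fun k => M k t) :
    IsSupermart Q fun t => ∑' k, M k t :=
  of_tendsto hQ (fun n => sum hQ (Finset.range n) fun k _ => hM k) fun t => by
    simpa only [Finset.sum_apply] using (hsum t).hasSum.tendsto_sum_nat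

theorem exists_path_le [Finite X] [Nonempty X] (hQ : Coherent Q) {M : List X → ℝ}
    (hM : IsSupermart Q M) (t : List X) :
    ∃ ω : ℕ → X, pref ω t.length = t ∧ ∀ n, t.length ≤ n → M (pref ω n) ≤ M t := by
  choose g hg using fun u => hQ.exists_le u (pdiff M u)
  obtain ⟨ω, hωt, hωg⟩ := exists_path_extending t g
  refine ⟨ω, hωt, fun n hn => ?_⟩
  induction n, hn using Nat.le_induction with
  | base => rw [hωt]
  | succ n hn ih =>
    have := (hg (pref ω n)).trans (hM _)
    rw [pref_succ, hωg n hn]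
    simp only [pdiff] at this
    linarith

end IsSupermart

/-- State of a bettor who opens a bet at every situation `u` with `start u` while no bet is
running; a bet opened at `s` (the `anchor`) holds `l * capital` units of `N s - N s s` and is
closed, banking its value, as soon as `N s` reaches `b`. -/
structure BetState (X : Type*) where
  capital : ℝ
  anchor : Option (List X)

section Betting

variable (start : List X → Prop) (N : List X → List X → ℝ) (b l : ℝ)

open Classical in
noncomputable def BetState.launch (c : ℝ) (u : List X) : BetState X :=
  ⟨c, if start u then some u else none⟩

noncomputable def BetState.value (σ : BetState X) (t : List X) : ℝ :=
  match σ.anchor with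
  | none => σ.capital
  | some s => σ.capital * (1 + l * (N s t - N s s))

noncomputable def betStep (σ : BetState X) (u : List X) : BetState X :=
  match σ.anchor with
  | none => BetState.launch start σ.capital u
  | some s => if N s u < b then σ else BetState.launch start (σ.value N l u) u

noncomputable def betStateRev : List X → BetState X
  | [] => BetState.launch start 1 []
  | x :: r => betStep start N b l (betStateRev r) (x :: r).reverse

noncomputable def betState (t : List X) : BetState X := betStateRev start N b l t.reverse

noncomputable def bet (t : List X) : ℝ := (betState start N b l t).value N l t

variable {start N b l}

namespace BetState

@[simp]
theorem capital_launch (c : ℝ) (u : List X) : (launch start c u).capital = c := rfl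

theorem eq_and_start_of_anchor_launch {c : ℝ} {u s : List X}
    (h : (launch start c u).anchor = some s) : s = u ∧ start u := by
  simp only [launch] at h
  split_ifs at h with hu
  exact ⟨(Option.some_injective _ h).symm, hu⟩

theorem value_launch (c : ℝ) (u : List X) : (launch start c u).value N l u = c := by
  simp only [value, launch]
  split_ifs <;> simp

theorem value_of_anchor_none {σ : BetState X} (h : σ.anchor = none) (t : List X) :
    σ.value N l t = σ.capital := by
  simp [value, h]

theorem value_of_anchor_some {σ : BetState X} {s : List X} (h : σ.anchor = some s)
    (t : List X) : σ.value N l t = σ.capital * (1 + l * (N s t - N s s)) := by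
  simp [value, h]

theorem mul_capital_le_value {σ : BetState X} {s u : List X} {a : ℝ} (h : σ.anchor = some s)
    (hs : N s s < a) (hu : b ≤ N s u) (hl : 0 ≤ l) (hσ : 0 ≤ σ.capital) :
    (1 + l * (b - a)) * σ.capital ≤ σ.value N l u := by
  rw [value_of_anchor_some h]
  nlinarith [mul_le_mul_of_nonneg_left (by linarith : b - a ≤ N s u - N s s) hl]

end BetState

open BetState

theorem betStep_of_anchor_none {σ : BetState X} (h : σ.anchor = none) (u : List X) :
    betStep start N b l σ u = launch start σ.capital u := by
  simp [betStep, h]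

theorem betStep_of_anchor_some {σ : BetState X} {s : List X} (h : σ.anchor = some s)
    (u : List X) : betStep start N b l σ u =
      if N s u < b then σ else launch start (σ.value N l u) u := by
  simp [betStep, h]

theorem betState_append_singleton (t : List X) (x : X) :
    betState start N b l (t ++ [x]) = betStep start N b l (betState start N b l t) (t ++ [x]) := by
  simp [betState, betStateRev]

theorem bet_nil : bet start N b l [] = 1 := value_launch 1 []

/-- Holds in every branch of `betStep` because closing a bet banks exactly its value. -/
theorem bet_append_singleton (t : List X) (x : X) :
    bet start N b l (t ++ [x]) = (betState start N b l t).value N l (t ++ [x]) := by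
  rw [bet, betState_append_singleton]
  rcases h : (betState start N b l t).anchor with _ | s
  · rw [betStep_of_anchor_none h, value_launch, value_of_anchor_none h]
  · rw [betStep_of_anchor_some h]
    split_ifs
    · rfl
    · exact value_launch _ _

theorem half_le_one_add_mul_sub {C : ℝ} (hl : 0 ≤ l)
    (hbdd : ∀ s t, start s → s <+: t → |N s t| ≤ C) (hlC : 4 * l * C ≤ 1) {s t : List X}
    (hs : start s) (hst : s <+: t) : 1 / 2 ≤ 1 + l * (N s t - N s s) := by
  have h₁ := abs_le.1 (hbdd s t hs hst)
  have h₂ := abs_le.1 (hbdd s s hs (List.prefix_refl s))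
  nlinarith

section Invariant

variable {a : ℝ} (hlt : ∀ s, start s → N s s < a) (hab : a < b) (hl : 0 ≤ l)
include hlt hab hl

theorem betState_spec (t : List X) : 1 ≤ (betState start N b l t).capital ∧
    ∀ s, (betState start N b l t).anchor = some s → start s ∧ s <+: t := by
  have launched : ∀ c u s, (launch start c u).anchor = some s → start s ∧ s <+: u :=
    fun c u s h => by
      obtain ⟨rfl, hs⟩ := eq_and_start_of_anchor_launch h
      exact ⟨hs, List.prefix_refl s⟩
  induction t using List.reverseRecOn with
  | nil => exact ⟨le_rfl, launched 1 []⟩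
  | append_singleton t x ih =>
    obtain ⟨hcap, hanc⟩ := ih
    rw [betState_append_singleton]
    rcases h : (betState start N b l t).anchor with _ | s
    · rw [betStep_of_anchor_none h]
      exact ⟨hcap, launched _ _⟩
    · obtain ⟨hs, hst⟩ := hanc s h
      rw [betStep_of_anchor_some h]
      split_ifs with hN
      · exact ⟨hcap, fun s' hs' => by
          obtain rfl : s = s' := Option.some_injective _ (h.symm.trans hs')
          exact ⟨hs, hst.trans (List.prefix_append t [x])⟩⟩
      · refine ⟨?_, launched _ _⟩
        rw [capital_launch]
        have := mul_capital_le_value h (hlt s hs) (le_of_not_gt hN) hl (by linarith)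
        nlinarith [mul_nonneg hl (sub_nonneg.2 hab.le)]

theorem capital_le_capital_append_singleton (t : List X) (x : X) :
    (betState start N b l t).capital ≤ (betState start N b l (t ++ [x])).capital := by
  obtain ⟨hcap, hanc⟩ := betState_spec hlt hab hl t
  rw [betState_append_singleton]
  rcases h : (betState start N b l t).anchor with _ | s
  · rw [betStep_of_anchor_none h, capital_launch]
  · rw [betStep_of_anchor_some h]
    split_ifs with hN
    · exact le_rfl
    · have := mul_capital_le_value h (hlt s (hanc s h).1) (le_of_not_gt hN) hl (by linarith)
      rw [capital_launch]
      nlinarith [mul_nonneg hl (sub_nonneg.2 hab.le)]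

theorem monotone_capital_pref (ω : ℕ → X) :
    Monotone fun n => (betState start N b l (pref ω n)).capital :=
  monotone_nat_of_le_succ fun n => by
    simpa only [pref_succ] using capital_le_capital_append_singleton hlt hab hl (pref ω n) (ω n)

theorem mul_capital_le_or_betState_eq {t s : List X}
    (hs : (betState start N b l t).anchor = some s) (x : X) :
      (1 + l * (b - a)) * (betState start N b l t).capital
        ≤ (betState start N b l (t ++ [x])).capital ∨
      N s (t ++ [x]) < b ∧ betState start N b l (t ++ [x]) = betState start N b l t := by
  obtain ⟨hcap, hanc⟩ := betState_spec hlt hab hl t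
  rw [betState_append_singleton, betStep_of_anchor_some hs]
  split_ifs with hN
  · exact Or.inr ⟨hN, rfl⟩
  · rw [capital_launch]
    exact Or.inl (mul_capital_le_value hs (hlt s (hanc s hs).1) (le_of_not_gt hN) hl (by linarith))

theorem exists_capital_gain {ω : ℕ → X} {m : ℕ} {s : List X}
    (hs : (betState start N b l (pref ω m)).anchor = some s)
    (hcross : ∀ᶠ n in atTop, b ≤ N s (pref ω n)) :
    ∃ n, (1 + l * (b - a)) * (betState start N b l (pref ω m)).capital
      ≤ (betState start N b l (pref ω n)).capital := by
  set σ := betState start N b l (pref ω m)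
  have running : ∀ j, (∃ n, (1 + l * (b - a)) * σ.capital
      ≤ (betState start N b l (pref ω n)).capital) ∨ betState start N b l (pref ω (m + j)) = σ := by
    intro j
    induction j with
    | zero => exact Or.inr rfl
    | succ j ih =>
      rcases ih with hgain | hj
      · exact Or.inl hgain
      rcases mul_capital_le_or_betState_eq hlt hab hl (hj ▸ hs) (ω (m + j)) with hgain | ⟨-, hstay⟩
      · exact Or.inl ⟨m + j + 1, by rw [pref_succ]; rwa [hj] at hgain⟩
      · right; rwa [← add_assoc, pref_succ, hstay]
  obtain ⟨J, hJ⟩ := eventually_atTop.1 hcross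
  rcases running J with hgain | hJσ
  · exact hgain
  rcases mul_capital_le_or_betState_eq hlt hab hl (hJσ ▸ hs) (ω (m + J)) with hgain | ⟨hN, -⟩
  · exact ⟨m + J + 1, by rw [pref_succ]; rwa [hJσ] at hgain⟩
  · exact absurd (hJ (m + J + 1) (by omega)) (by rw [pref_succ]; exact not_le.2 hN)

theorem isSupermart_bet {Q : List X → (X → ℝ) → ℝ} (hQ : Coherent Q)
    (hsuper : ∀ s, start s → IsSupermart Q (N s)) : IsSupermart Q (bet start N b l) := by
  intro t
  obtain ⟨hcap, hanc⟩ := betState_spec hlt hab hl t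
  rcases h : (betState start N b l t).anchor with _ | s
  · have hd : pdiff (bet start N b l) t = 0 := by
      funext x
      rw [pdiff, bet_append_singleton, bet, value_of_anchor_none h, value_of_anchor_none h,
        sub_self, Pi.zero_apply]
    rw [hd, hQ.map_zero]
  · have hd : pdiff (bet start N b l) t
        = ((betState start N b l t).capital * l) • pdiff (N s) t := by
      funext x
      simp only [pdiff, Pi.smul_apply, smul_eq_mul]
      rw [bet_append_singleton, bet, value_of_anchor_some h, value_of_anchor_some h]
      ring
    have hc : 0 ≤ (betState start N b l t).capital * l := mul_nonneg (by linarith) hl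
    rw [hd, (hQ t).2.2 _ _ hc]
    exact mul_nonpos_of_nonneg_of_nonpos hc (hsuper s (hanc s h).1 t)

section Bounded

variable {C : ℝ} (hbdd : ∀ s t, start s → s <+: t → |N s t| ≤ C) (hlC : 4 * l * C ≤ 1)
include hbdd hlC

theorem half_capital_le_bet (t : List X) :
    (betState start N b l t).capital / 2 ≤ bet start N b l t := by
  obtain ⟨hcap, hanc⟩ := betState_spec hlt hab hl t
  rw [bet]
  rcases h : (betState start N b l t).anchor with _ | s
  · rw [value_of_anchor_none h]
    linarith
  · obtain ⟨hs, hst⟩ := hanc s h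
    rw [value_of_anchor_some h]
    nlinarith [half_le_one_add_mul_sub hl hbdd hlC hs hst]

theorem bet_pos (t : List X) : 0 < bet start N b l t := by
  linarith [half_capital_le_bet hlt hab hl hbdd hlC t, (betState_spec hlt hab hl t).1]

theorem bet_append_singleton_le (hC : 0 ≤ C) (t : List X) (x : X) :
    bet start N b l (t ++ [x]) ≤ (1 + 4 * l * C) * bet start N b l t := by
  obtain ⟨hcap, hanc⟩ := betState_spec hlt hab hl t
  rw [bet_append_singleton, bet]
  rcases h : (betState start N b l t).anchor with _ | s
  · rw [value_of_anchor_none h, value_of_anchor_none h]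
    nlinarith [mul_nonneg hl hC]
  · obtain ⟨hs, hst⟩ := hanc s h
    rw [value_of_anchor_some h, value_of_anchor_some h]
    have hst' : s <+: t ++ [x] := hst.trans (List.prefix_append t [x])
    have h₁ := abs_le.1 (hbdd s t hs hst)
    have h₂ := abs_le.1 (hbdd s (t ++ [x]) hs hst')
    have hlC₀ : 0 ≤ l * C := mul_nonneg hl hC
    have hfac : 1 + l * (N s (t ++ [x]) - N s s)
        ≤ (1 + 4 * l * C) * (1 + l * (N s t - N s s)) := by
      nlinarith [mul_le_mul_of_nonneg_left (half_le_one_add_mul_sub hl hbdd hlC hs hst) hlC₀]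
    calc (betState start N b l t).capital * (1 + l * (N s (t ++ [x]) - N s s))
        ≤ (betState start N b l t).capital * ((1 + 4 * l * C) * (1 + l * (N s t - N s s))) :=
          mul_le_mul_of_nonneg_left hfac (by linarith)
      _ = _ := by ring

end Bounded

end Invariant

theorem anchor_launch_of_start {u : List X} (hu : start u) (c : ℝ) :
    (launch start c u).anchor = some u := by
  simp [launch, hu]

theorem exists_anchor_of_start {u : List X} (hu : start u) :
    ∃ s, (betState start N b l u).anchor = some s := by
  rcases List.eq_nil_or_concat' u with rfl | ⟨t, x, rfl⟩
  · exact ⟨[], anchor_launch_of_start hu 1⟩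
  rw [betState_append_singleton]
  rcases h : (betState start N b l t).anchor with _ | s
  · exact ⟨_, by rw [betStep_of_anchor_none h, anchor_launch_of_start hu]⟩
  · rw [betStep_of_anchor_some h]
    split_ifs
    · exact ⟨s, h⟩
    · exact ⟨_, anchor_launch_of_start hu _⟩

theorem tendsto_capital_pref {a : ℝ} (hlt : ∀ s, start s → N s s < a) (hab : a < b) (hl : 0 < l)
    {ω : ℕ → X} (hstart : ∃ᶠ n in atTop, start (pref ω n))
    (hcross : ∀ s, start s → pref ω s.length = s → ∀ᶠ n in atTop, b ≤ N s (pref ω n)) :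
    Tendsto (fun n => (betState start N b l (pref ω n)).capital) atTop atTop := by
  set ρ := 1 + l * (b - a)
  have hρ : 1 < ρ := by simpa [ρ] using mul_pos hl (sub_pos.2 hab)
  have hmono := monotone_capital_pref hlt hab hl.le ω
  have hpow : ∀ K : ℕ, ∃ n, ρ ^ K ≤ (betState start N b l (pref ω n)).capital := by
    intro K
    induction K with
    | zero => exact ⟨0, by rw [pow_zero]; exact (betState_spec hlt hab hl.le []).1⟩
    | succ K ih =>
      obtain ⟨n, hn⟩ := ih
      obtain ⟨m, hnm, hm⟩ := frequently_atTop.1 hstart n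
      obtain ⟨s, hs⟩ := exists_anchor_of_start (b := b) (l := l) (N := N) hm
      obtain ⟨hs_start, hs_pref⟩ := (betState_spec hlt hab hl.le _).2 s hs
      obtain ⟨n', hn'⟩ := exists_capital_gain hlt hab hl.le hs
        (hcross s hs_start (pref_length_eq_of_prefix hs_pref))
      refine ⟨n', ?_⟩
      calc ρ ^ (K + 1) = ρ * ρ ^ K := pow_succ' ρ K
        _ ≤ ρ * (betState start N b l (pref ω m)).capital := by
          gcongr
          exact hn.trans (hmono hnm)
        _ ≤ _ := hn'
  refine tendsto_atTop_atTop_of_monotone hmono fun B => ?_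
  obtain ⟨K, hK⟩ := pow_unbounded_of_one_lt B hρ
  obtain ⟨n, hn⟩ := hpow K
  exact ⟨n, hK.le.trans hn⟩

theorem tendsto_bet_pref {a C : ℝ} (hlt : ∀ s, start s → N s s < a) (hab : a < b)
    (hl : 0 < l) (hbdd : ∀ s t, start s → s <+: t → |N s t| ≤ C) (hlC : 4 * l * C ≤ 1)
    {ω : ℕ → X} (hstart : ∃ᶠ n in atTop, start (pref ω n))
    (hcross : ∀ s, start s → pref ω s.length = s → ∀ᶠ n in atTop, b ≤ N s (pref ω n)) :
    Tendsto (fun n => bet start N b l (pref ω n)) atTop atTop :=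
  tendsto_atTop_mono (fun _ => half_capital_le_bet hlt hab hl.le hbdd hlC _)
    ((tendsto_capital_pref hlt hab hl hstart hcross).atTop_div_const two_pos)

end Betting

section Witness

variable [Finite X] [Nonempty X] {Q : List X → (X → ℝ) → ℝ}

/-- Capping at `C` keeps the supermartingale property, and the descending path through `t`
shows that a supermartingale whose liminf dominates `f ≥ -C` stays above `-C`. -/
theorem exists_witness_of_EV_lt (hQ : Coherent Q) {f : (ℕ → X) → ℝ} {C : ℝ}
    (hf : ∀ ω, |f ω| ≤ C) {s : List X} {a : ℝ}
    (h : EV Q (fun ω => ((f ω : ℝ) : EReal)) s < a) :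
    ∃ M : List X → ℝ, IsSupermart Q M ∧ M s < a ∧ (∀ t, s <+: t → |M t| ≤ C) ∧
      ∀ ω, pref ω s.length = s → ∀ r < f ω, ∀ᶠ n in atTop, r < M (pref ω n) := by
  obtain ⟨_, ⟨M, hM, -, hlim, rfl⟩, hMa⟩ := sInf_lt_iff.1 h
  refine ⟨fun t => min (M t) C, hM.min_const hQ C,
    (min_le_left _ _).trans_lt (EReal.coe_lt_coe_iff.1 hMa), fun t hst => ?_, fun ω hω r hr => ?_⟩
  · obtain ⟨ω, hωt, hdesc⟩ := hM.exists_path_le hQ t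
    have hliminf : liminf (fun n => ((M (pref ω n) : ℝ) : EReal)) atTop ≤ M t :=
      liminf_le_of_frequently_le ((eventually_ge_atTop t.length).mono fun n hn =>
        EReal.coe_le_coe_iff.2 (hdesc n hn)).frequently
    have hfM : f ω ≤ M t := EReal.coe_le_coe_iff.1
      ((hlim ω (pref_length_eq_of_prefix (hωt ▸ hst))).trans hliminf)
    have hfC := abs_le.1 (hf ω)
    exact abs_le.2 ⟨le_min (by linarith) (by linarith), min_le_right _ _⟩
  · have hfC := abs_le.1 (hf ω)
    filter_upwards [eventually_lt_of_lt_liminf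
      ((EReal.coe_lt_coe_iff.2 hr).trans_le (hlim ω hω))] with n hn
    exact lt_min (EReal.coe_lt_coe_iff.1 hn) (by linarith)

end Witness

structure IsPosTestSupermartMulLE (Q : List X → (X → ℝ) → ℝ) (α : ℝ) (T : List X → ℝ) :
    Prop where
  isTestSupermart : IsTestSupermart Q T
  pos : ∀ s, 0 < T s
  mul_le : ∀ s x, T (s ++ [x]) ≤ α * T s

namespace IsPosTestSupermartMulLE

variable {Q : List X → (X → ℝ) → ℝ} {α : ℝ}

theorem le_pow {T : List X → ℝ} (hT : IsPosTestSupermartMulLE Q α T) (t : List X) :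
    T t ≤ α ^ t.length := by
  induction t using List.reverseRecOn with
  | nil => exact hT.isTestSupermart.2.2.le
  | append_singleton t x ih =>
    have hx := hT.mul_le t x
    have hpos := hT.pos (t ++ [x])
    have ht := hT.pos t
    rw [List.length_append, List.length_singleton, pow_succ']
    nlinarith

theorem exists_ge_half_pow_succ_mul [Finite X] [Nonempty X] (hQ : Coherent Q) {G : ℕ → List X → ℝ}
    (hG : ∀ k, IsPosTestSupermartMulLE Q α (G k)) :
    ∃ T, IsPosTestSupermartMulLE Q α T ∧ ∀ k t, (1 / 2 : ℝ) ^ (k + 1) * G k t ≤ T t := by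
  have hterm : ∀ k t, 0 < (1 / 2 : ℝ) ^ (k + 1) * G k t := fun k t =>
    mul_pos (by positivity) ((hG k).pos t)
  have hsum : ∀ t, Summable fun k => (1 / 2 : ℝ) ^ (k + 1) * G k t := fun t =>
    (summable_geometric_two.mul_right (α ^ t.length / 2)).of_nonneg_of_le (fun k => (hterm k t).le)
      fun k => by
        rw [pow_succ]
        nlinarith [(hG k).le_pow t, pow_pos (by norm_num : (0 : ℝ) < 1 / 2) k]
  have hge : ∀ k t, (1 / 2 : ℝ) ^ (k + 1) * G k t ≤ ∑' j, (1 / 2 : ℝ) ^ (j + 1) * G j t :=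
    fun k t => (hsum t).le_tsum k fun j _ => (hterm j t).le
  have hpos : ∀ t, 0 < ∑' k, (1 / 2 : ℝ) ^ (k + 1) * G k t := fun t =>
    (hterm 0 t).trans_le (hge 0 t)
  refine ⟨fun t => ∑' k, (1 / 2 : ℝ) ^ (k + 1) * G k t, ⟨⟨?_, fun t => (hpos t).le, ?_⟩, hpos, ?_⟩,
    hge⟩
  · exact IsSupermart.tsum hQ
      (fun k => (hG k).isTestSupermart.1.const_mul hQ (by positivity)) hsum
  · simp only [(hG _).isTestSupermart.2.2, mul_one, pow_succ, tsum_mul_right, tsum_geometric_two]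
    norm_num
  · intro t x
    rw [← tsum_mul_left]
    refine (hsum _).tsum_le_tsum (fun k => ?_) ((hsum t).mul_left α)
    nlinarith [(hG k).mul_le t x, pow_pos (by norm_num : (0 : ℝ) < 1 / 2) (k + 1)]

end IsPosTestSupermartMulLE

theorem exists_isPosTestSupermartMulLE_tendsto_of_EV_lt [Finite X] [Nonempty X]
    {Q : List X → (X → ℝ) → ℝ} (hQ : Coherent Q) {f : (ℕ → X) → ℝ} {C : ℝ}
    (hf : ∀ ω, |f ω| ≤ C) {α : ℝ} (hα : 1 < α) {a b : ℝ} (hab : a < b) :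
    ∃ T, IsPosTestSupermartMulLE Q α T ∧ ∀ ω : ℕ → X,
      (∃ᶠ n in atTop, EV Q (fun ω' => ((f ω' : ℝ) : EReal)) (pref ω n) < a) → b < f ω →
        Tendsto (fun n => T (pref ω n)) atTop atTop := by
  choose! N hN using fun s (h : EV Q (fun ω' => ((f ω' : ℝ) : EReal)) s < a) =>
    exists_witness_of_EV_lt hQ hf h
  have hC : 0 ≤ C := (abs_nonneg _).trans (hf fun _ => Classical.arbitrary X)
  set l := min (α - 1) 1 / (4 * (C + 1))
  have hl : 0 < l := div_pos (lt_min (by linarith) one_pos) (by linarith)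
  have hlC : 4 * l * C ≤ min (α - 1) 1 := by
    have : 4 * l * (C + 1) = min (α - 1) 1 := by simp only [l]; field_simp
    nlinarith
  have hlt : ∀ s, EV Q (fun ω' => ((f ω' : ℝ) : EReal)) s < a → N s s < a :=
    fun s hs => (hN s hs).2.1
  have hbdd := fun s t hs => (hN s hs).2.2.1 t
  have hlC₁ : 4 * l * C ≤ 1 := hlC.trans (min_le_right _ _)
  have hpos := bet_pos hlt hab hl.le hbdd hlC₁
  refine ⟨bet _ N b l, ⟨⟨isSupermart_bet hlt hab hl.le hQ fun s hs => (hN s hs).1,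
    fun t => (hpos t).le, bet_nil⟩, hpos, fun t x => ?_⟩, fun ω hω hb => ?_⟩
  · calc bet _ N b l (t ++ [x]) ≤ (1 + 4 * l * C) * bet _ N b l t :=
          bet_append_singleton_le hlt hab hl.le hbdd hlC₁ hC t x
      _ ≤ α * bet _ N b l t :=
          mul_le_mul_of_nonneg_right (by linarith [min_le_left (α - 1) 1]) (hpos t).le
  · exact tendsto_bet_pref hlt hab hl hbdd hlC₁ hω fun s hs hωs =>
      ((hN s hs).2.2.2 ω hωs b hb).mono fun _ => le_of_lt

end

theorem levy_zero_one_law {X : Type*} [Fintype X] [Nonempty X]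
    (Q : List X → (X → ℝ) → ℝ) (hQ : Coherent Q)
    (f : (ℕ → X) → ℝ) (hf : ∃ C : ℝ, ∀ ω, |f ω| ≤ C)
    (α : ℝ) (hα : 1 < α) :
    ∃ T : List X → ℝ, IsTestSupermart Q T ∧ (∀ s, 0 < T s) ∧
      (∀ (s : List X) (x : X), pmul T s x ≤ α) ∧
      ∀ ω : ℕ → X,
        Filter.liminf (fun n => EV Q (fun ω' => ((f ω' : ℝ) : EReal)) (pref ω n))
            Filter.atTop < (f ω : EReal) →
        Filter.Tendsto (fun n => T (pref ω n)) Filter.atTop Filter.atTop := by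
  obtain ⟨C, hC⟩ := hf
  have : Nonempty {p : ℚ × ℚ // p.1 < p.2} := ⟨⟨(0, 1), one_pos⟩⟩
  obtain ⟨e, he⟩ := exists_surjective_nat {p : ℚ × ℚ // p.1 < p.2}
  choose G hG hG_tendsto using fun k =>
    exists_isPosTestSupermartMulLE_tendsto_of_EV_lt hQ hC hα (Rat.cast_lt.2 (e k).2)
  obtain ⟨T, hT, hT_ge⟩ := IsPosTestSupermartMulLE.exists_ge_half_pow_succ_mul hQ hG
  refine ⟨T, hT.isTestSupermart, hT.pos, fun s x => (div_le_iff₀ (hT.pos s)).2 (hT.mul_le s x),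
    fun ω hω => ?_⟩
  obtain ⟨q₁, hq₁, hq₁f⟩ := EReal.exists_rat_btwn_of_lt hω
  obtain ⟨q₂, hq₁₂, hq₂⟩ := exists_rat_btwn (EReal.coe_lt_coe_iff.1 hq₁f)
  obtain ⟨k, hk⟩ := he ⟨(q₁, q₂), Rat.cast_lt.1 hq₁₂⟩
  have hfreq := frequently_lt_of_liminf_lt (by isBoundedDefault) hq₁
  have hGk := hG_tendsto k ω (by rw [hk]; exact hfreq) (by rw [hk]; exact hq₂)
  exact tendsto_atTop_mono (fun _ => hT_ge k _) (hGk.const_mul_atTop (by positivity))
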